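/- Suppose A = {a₁, …, a_{3m}} with Σ s(aᵢ) = mB and B/4 < s(aᵢ) < B/2 admits a partition into m disjoint triples each summing to B. Then the trace constructed in the reduction (with processes P_{aᵢ} consisting of Wxa' followed by s(aᵢ) copies of Wxb' followed by Wxc'; auxiliary processes of 3m writes Wxa, mB writes Wxb, 3m writes Wxc; and P₀ consisting of m slot sequences each being (Rxa Rxa')³ followed by (Rxb Rxb')^B followed by (Rxc Rxc')³) admits a legal schedule respecting program order. -/

import Mathlib

/-! Every read of `P₀` is scheduled at an odd time `2k + 1`, immediately preceded at time `2k` by a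
write of the value it reads. In the `j`-th slot, the reads of `a`, `b`, `c` are served by the
auxiliary processes, and the reads of `a'`, `b'`, `c'` by the three processes `P_{aᵢ}` of the `j`-th
triple, taken in increasing order of `i`: their `Wxa'` serve the three `Rxa'`, their
`s(aᵢ₁) + s(aᵢ₂) + s(aᵢ₃) = B` writes `Wxb'` serve the `B` reads `Rxb'` one after the other,
and their `Wxc'` serve the three `Rxc'`. This respects program order, and since there are as many writes as
reads, every write serves exactly one read, so the times are distinct. -/

/-- An operation: a read or write on variable `var` with value `val` (the issuing
process is given by the position of the operation in the trace). -/
structure Op where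
  isRead : Bool
  var : ℕ
  val : ℕ
deriving DecidableEq

/-- Write of value `v` to the single shared variable `x` (variable `0`). -/
def Wr (v : ℕ) : Op := ⟨false, 0, v⟩

/-- Read of value `v` from the single shared variable `x` (variable `0`). -/
def Rd (v : ℕ) : Op := ⟨true, 0, v⟩

/-- Values `a, a', b, b', c, c'` are the six distinct integers `1,…,6`. -/
def va : ℕ := 1
def va' : ℕ := 2
def vb : ℕ := 3
def vb' : ℕ := 4
def vc : ℕ := 5
def vc' : ℕ := 6

/-- Open subsequence `Rxa Rxa' Rxa Rxa' Rxa Rxa'`. -/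
def openSeq : List Op := [Rd va, Rd va', Rd va, Rd va', Rd va, Rd va']

/-- Sum subsequence `(Rxb Rxb')^B`. -/
def sumSeq (B : ℕ) : List Op := (List.replicate B [Rd vb, Rd vb']).flatten

/-- Close subsequence `Rxc Rxc' Rxc Rxc' Rxc Rxc'`. -/
def closeSeq : List Op := [Rd vc, Rd vc', Rd vc, Rd vc', Rd vc, Rd vc']

/-- The read-only process `P₀`: `m` slot sequences. -/
def P0 (m B : ℕ) : List Op := (List.replicate m (openSeq ++ sumSeq B ++ closeSeq)).flatten

/-- Process `P_{aᵢ}`: `Wxa'`, then `s(aᵢ)` copies of `Wxb'`, then `Wxc'`. -/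
def Pa (sz : ℕ) : List Op := Wr va' :: (List.replicate sz (Wr vb') ++ [Wr vc'])

/-- The trace of the reduction from Unary 3-Partition: `P₀`, the processes
`P_{a₁},…,P_{a_{3m}}`, and the auxiliary processes `P_{c₁} = (Wxa)^{3m}`,
`P_{c₂} = (Wxb)^{mB}`, `P_{c₃} = (Wxc)^{3m}`. -/
def reductionTrace (m B : ℕ) (s : Fin (3 * m) → ℕ) : List (List Op) :=
  P0 m B :: (List.ofFn (fun i => Pa (s i)) ++
    [List.replicate (3 * m) (Wr va), List.replicate (m * B) (Wr vb),
     List.replicate (3 * m) (Wr vc)])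

/-- A position of an operation in a trace: a process index and an index in that
process's sequence. -/
def Pos (procs : List (List Op)) : Type := Σ i : Fin procs.length, Fin ((procs.get i).length)

/-- The operation at a position of the trace. -/
def opAt {procs : List (List Op)} (p : Pos procs) : Op := (procs.get p.1).get p.2

/-- `σ` numbers the operations of the trace as a legal schedule respecting program
order: it is injective, operations of the same process keep their order, and every
read reads the value of the latest preceding write on the same variable. -/
def LegalSched (procs : List (List Op)) (σ : Pos procs → ℕ) : Prop :=
  Function.Injective σ ∧
  (∀ p q : Pos procs, p.1.val = q.1.val → p.2.val < q.2.val → σ p < σ q) ∧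
  (∀ p : Pos procs, (opAt p).isRead = true →
    ∃ q : Pos procs, (opAt q).isRead = false ∧ σ q < σ p ∧
      (opAt q).var = (opAt p).var ∧ (opAt q).val = (opAt p).val ∧
      ∀ q' : Pos procs, (opAt q').isRead = false → (opAt q').var = (opAt p).var →
        σ q < σ q' → ¬ σ q' < σ p)

/-- A solution of the 3-Partition instance: an assignment of the `3m` elements to `m`
triples, each summing to `B`. -/
def ThreePartSol (m B : ℕ) (s : Fin (3 * m) → ℕ) : Prop :=
  ∃ f : Fin (3 * m) → Fin m,
    (∀ j : Fin m, (Finset.univ.filter (fun i => f i = j)).card = 3) ∧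
    (∀ j : Fin m, ∑ i ∈ Finset.univ.filter (fun i => f i = j), s i = B)

open Finset

instance (procs : List (List Op)) : Fintype (Pos procs) :=
  inferInstanceAs (Fintype (Σ i : Fin procs.length, Fin (procs.get i).length))

namespace Pos

variable {procs : List (List Op)}

theorem ext {p q : Pos procs} (h₁ : p.1.val = q.1.val) (h₂ : p.2.val = q.2.val) : p = q := by
  obtain ⟨i, k⟩ := p
  obtain ⟨i', k'⟩ := q
  obtain rfl : i = i' := Fin.ext h₁
  obtain rfl : k = k' := Fin.ext h₂
  rfl

theorem card_eq_sum_length : Fintype.card (Pos procs) = (procs.map List.length).sum := by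
  change Fintype.card (Σ i : Fin procs.length, Fin (procs.get i).length) = _
  rw [Fintype.card_sigma]
  simp

theorem card_filter_ne_add (r : Fin procs.length) :
    (Finset.univ.filter fun p : Pos procs => p.1 ≠ r).card + (procs.get r).length =
      (procs.map List.length).sum := by
  have : (Finset.univ.filter fun p : Pos procs => p.1 = r).card = (procs.get r).length := by
    rw [← Fintype.card_subtype]
    exact (Fintype.card_congr (Equiv.sigmaSubtype r)).trans (Fintype.card_fin _)
  rw [← this, add_comm, Finset.card_filter_add_card_filter_not, Finset.card_univ,
    card_eq_sum_length]

theorem getElem?_opAt (p : Pos procs) {l : List Op} (hl : procs[p.1.val]? = some l) :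
    l[p.2.val]? = some (opAt p) := by
  obtain ⟨⟨n, hn⟩, ⟨k, hk⟩⟩ := p
  obtain rfl : procs[n] = l := by simpa [hn] using hl
  simp [opAt]

theorem exists_of_getElem? {n k : ℕ} {l : List Op} {o : Op} (hl : procs[n]? = some l)
    (ho : l[k]? = some o) : ∃ p : Pos procs, p.1.val = n ∧ p.2.val = k ∧ opAt p = o := by
  obtain ⟨hn, rfl⟩ := List.getElem?_eq_some_iff.mp hl
  obtain ⟨hk, rfl⟩ := List.getElem?_eq_some_iff.mp ho
  exact ⟨⟨⟨n, hn⟩, ⟨k, hk⟩⟩, rfl, rfl, rfl⟩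

end Pos

theorem exists_legalSched_of_cover {procs : List (List Op)} (r : Fin procs.length)
    (hread : ∀ p : Pos procs, (opAt p).isRead = true ↔ p.1 = r)
    (g : Pos procs → ℕ)
    (hmono : ∀ p q : Pos procs, p.1 = q.1 → p.1 ≠ r → p.2.val < q.2.val → g p < g q)
    (hlt : ∀ q : Pos procs, q.1 ≠ r → g q < (procs.get r).length)
    (hcover : ∀ p : Pos procs, p.1 = r → ∃ q : Pos procs, q.1 ≠ r ∧ g q = p.2 ∧
      (opAt q).var = (opAt p).var ∧ (opAt q).val = (opAt p).val)
    (hlength : (procs.map List.length).sum ≤ 2 * (procs.get r).length) :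
    ∃ σ : Pos procs → ℕ, LegalSched procs σ := by
  classical
  have hwrite : ∀ q : Pos procs, q.1 ≠ r → (opAt q).isRead = false := fun q hq => by
    rw [← Bool.not_eq_true, hread]
    exact hq
  have hcount := Pos.card_filter_ne_add r
  set writes := Finset.univ.filter fun p : Pos procs => p.1 ≠ r
  have hinj : Set.InjOn g writes := by
    refine Finset.injOn_of_surjOn_of_card_le (t := Finset.range (procs.get r).length) g
      (fun q hq => by simpa using hlt q (by simpa [writes] using hq)) (fun k hk => ?_) ?_
    · have hk : k < (procs.get r).length := by simpa using hk
      obtain ⟨q, hq, hgq, -⟩ := hcover ⟨r, ⟨k, hk⟩⟩ rfl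
      exact ⟨q, by simpa [writes] using hq, hgq⟩
    · rw [Finset.card_range]
      omega
  refine ⟨fun p => if p.1 = r then 2 * p.2 + 1 else 2 * g p, ?_, ?_, ?_⟩
  · intro p q hpq
    by_cases hp : p.1 = r <;> by_cases hq : q.1 = r <;> simp only [hp, hq, if_true, if_false] at hpq
    · exact Pos.ext (by rw [hp, hq]) (by omega)
    · omega
    · omega
    · exact hinj (by simpa [writes] using hp) (by simpa [writes] using hq) (by omega)
  · intro p q hpq hlt
    have hpq : p.1 = q.1 := Fin.ext hpq
    by_cases hp : p.1 = r
    · simp only [hp, ← hpq, if_true]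
      omega
    · simp only [hp, ← hpq, if_false]
      have := hmono p q hpq hp hlt
      omega
  · intro p hp
    have hp := (hread p).1 hp
    obtain ⟨q, hq, hgq, hvar, hval⟩ := hcover p hp
    refine ⟨q, hwrite q hq, ?_, hvar, hval, fun q' hq' _ h₁ h₂ => ?_⟩
    · simp only [hp, hq, if_true, if_false]
      omega
    · have hq' : q'.1 ≠ r := fun h => by simp [(hread q').2 h] at hq'
      simp only [hp, hq, hq', if_true, if_false] at h₁ h₂
      omega

section FiberRank

variable {ι κ : Type*} [Fintype ι] [LinearOrder ι] [DecidableEq κ] (f : ι → κ) (s : ι → ℕ)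

def fiberBefore (i : ι) : Finset ι := univ.filter fun i' => f i' = f i ∧ i' < i

def fiberRank (i : ι) : ℕ := #(fiberBefore f i)

def fiberOffset (i : ι) : ℕ := ∑ i' ∈ fiberBefore f i, s i'

variable {f}

theorem notMem_fiberBefore (i : ι) : i ∉ fiberBefore f i := by
  simp [fiberBefore]

theorem insert_fiberBefore_subset_fiber (i : ι) :
    insert i (fiberBefore f i) ⊆ univ.filter fun i' => f i' = f i := by
  intro x hx
  rcases mem_insert.mp hx with rfl | hx
  · simp
  · simp only [fiberBefore, mem_filter] at hx ⊢
    exact ⟨hx.1, hx.2.1⟩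

theorem insert_fiberBefore_subset {i i' : ι} (hlt : i < i') (hf : f i = f i') :
    insert i (fiberBefore f i) ⊆ fiberBefore f i' := by
  intro x hx
  rcases mem_insert.mp hx with rfl | hx
  · simp [fiberBefore, hf, hlt]
  · simp only [fiberBefore, mem_filter, mem_univ, true_and] at hx ⊢
    exact ⟨hx.1.trans hf, hx.2.trans hlt⟩

theorem fiberRank_lt_card (i : ι) : fiberRank f i < #(univ.filter fun i' => f i' = f i) := by
  have := card_le_card (insert_fiberBefore_subset_fiber (f := f) i)
  rw [card_insert_of_notMem (notMem_fiberBefore i)] at this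
  exact this

theorem fiberRank_lt_fiberRank {i i' : ι} (hlt : i < i') (hf : f i = f i') :
    fiberRank f i < fiberRank f i' := by
  have := card_le_card (insert_fiberBefore_subset hlt hf)
  rwa [card_insert_of_notMem (notMem_fiberBefore i)] at this

theorem eq_of_fiberRank_eq {i i' : ι} (hf : f i = f i') (h : fiberRank f i = fiberRank f i') :
    i = i' := by
  rcases lt_trichotomy i i' with hlt | rfl | hlt
  · exact absurd h (fiberRank_lt_fiberRank hlt hf).ne
  · rfl
  · exact absurd h (fiberRank_lt_fiberRank hlt hf.symm).ne'

theorem exists_fiberRank_eq (j : κ) {t : ℕ} (ht : t < #(univ.filter fun i => f i = j)) :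
    ∃ i, f i = j ∧ fiberRank f i = t := by
  obtain ⟨i, hi, rfl⟩ := surj_on_of_inj_on_of_card_le (s := univ.filter fun i => f i = j)
    (t := range #(univ.filter fun i => f i = j)) (fun i _ => fiberRank f i)
    (fun i hi => by
      obtain rfl := (mem_filter.mp hi).2
      simpa using fiberRank_lt_card (f := f) i)
    (fun i₁ i₂ h₁ h₂ h =>
      eq_of_fiberRank_eq ((mem_filter.mp h₁).2.trans (mem_filter.mp h₂).2.symm) h)
    (by simp) t (mem_range.mpr ht)
  exact ⟨i, (mem_filter.mp hi).2, rfl⟩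

theorem fiberOffset_add_le_sum (i : ι) :
    fiberOffset f s i + s i ≤ ∑ i' ∈ univ.filter (fun i' => f i' = f i), s i' := by
  rw [fiberOffset, add_comm, ← sum_insert (notMem_fiberBefore i)]
  exact sum_le_sum_of_subset (insert_fiberBefore_subset_fiber i)

theorem fiberOffset_add_le_fiberOffset {i i' : ι} (hlt : i < i') (hf : f i = f i') :
    fiberOffset f s i + s i ≤ fiberOffset f s i' := by
  rw [fiberOffset, add_comm, ← sum_insert (notMem_fiberBefore i)]
  exact sum_le_sum_of_subset (insert_fiberBefore_subset hlt hf)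

theorem exists_fiberOffset_add_eq (j : κ) {v : ℕ}
    (hv : v < ∑ i ∈ univ.filter (fun i => f i = j), s i) :
    ∃ i r, f i = j ∧ r < s i ∧ fiberOffset f s i + r = v := by
  obtain ⟨⟨i, r⟩, hir, rfl⟩ := surj_on_of_inj_on_of_card_le
    (s := (univ.filter fun i => f i = j).sigma fun i => range (s i))
    (t := range (∑ i ∈ univ.filter (fun i => f i = j), s i))
    (fun p _ => fiberOffset f s p.1 + p.2)
    (fun p hp => by
      simp only [mem_sigma, mem_filter, mem_univ, true_and, mem_range] at hp ⊢
      have := fiberOffset_add_le_sum (f := f) s p.1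
      rw [hp.1] at this
      omega)
    (fun p₁ p₂ h₁ h₂ h => by
      simp only [mem_sigma, mem_filter, mem_univ, true_and, mem_range] at h₁ h₂ h
      rcases lt_trichotomy p₁.1 p₂.1 with hlt | heq | hlt
      · have := fiberOffset_add_le_fiberOffset s hlt (h₁.1.trans h₂.1.symm)
        omega
      · obtain ⟨i, r⟩ := p₁
        obtain ⟨i', r'⟩ := p₂
        obtain rfl : i = i' := heq
        obtain rfl : r = r' := by simpa using h
        rfl
      · have := fiberOffset_add_le_fiberOffset s hlt (h₂.1.trans h₁.1.symm)
        omega)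
    (by simp [card_sigma]) v (mem_range.mpr hv)
  simp only [mem_sigma, mem_filter, mem_univ, true_and, mem_range] at hir
  exact ⟨i, r, hir.1, hir.2, rfl⟩

end FiberRank

theorem List.getElem?_flatten_replicate {α : Type*} (l : List α) {n k : ℕ}
    (h : k < n * l.length) : (List.replicate n l).flatten[k]? = l[k % l.length]? := by
  induction n generalizing k with
  | zero => omega
  | succ n ih =>
    rw [List.replicate_succ, List.flatten_cons]
    by_cases hk : k < l.length
    · rw [List.getElem?_append_left hk, Nat.mod_eq_of_lt hk]
    · push Not at hk
      rw [List.getElem?_append_right hk, ih (by rw [Nat.succ_mul] at h; omega),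
        ← Nat.mod_eq_sub_mod hk]

def slotLen (B : ℕ) : ℕ := 2 * B + 12

def slotOp (B u : ℕ) : Op :=
  if u < 6 then (if u % 2 = 0 then Rd va else Rd va')
  else if u < 6 + 2 * B then (if u % 2 = 0 then Rd vb else Rd vb')
  else (if u % 2 = 0 then Rd vc else Rd vc')

theorem slotOp_isRead (B u : ℕ) : (slotOp B u).isRead = true := by
  unfold slotOp; split_ifs <;> rfl

theorem slotOp_var (B u : ℕ) : (slotOp B u).var = 0 := by
  unfold slotOp; split_ifs <;> rfl

theorem length_sumSeq (B : ℕ) : (sumSeq B).length = 2 * B := by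
  simp [sumSeq, Nat.mul_comm]

theorem length_slot (B : ℕ) : (openSeq ++ sumSeq B ++ closeSeq).length = slotLen B := by
  simp [openSeq, closeSeq, length_sumSeq, slotLen]

theorem getElem?_slot (B : ℕ) {u : ℕ} (hu : u < slotLen B) :
    (openSeq ++ sumSeq B ++ closeSeq)[u]? = some (slotOp B u) := by
  have hopen : openSeq.length = 6 := rfl
  rw [slotLen] at hu
  by_cases h₁ : u < 6
  · rw [List.getElem?_append_left (by simp [length_sumSeq]; omega),
      List.getElem?_append_left (by omega)]
    interval_cases u <;> rfl
  by_cases h₂ : u < 6 + 2 * B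
  · rw [List.getElem?_append_left (by simp [length_sumSeq]; omega),
      List.getElem?_append_right (by omega), hopen, sumSeq,
      List.getElem?_flatten_replicate _ (by simp; omega)]
    rcases Nat.mod_two_eq_zero_or_one u with h | h <;>
      simp [slotOp, h₁, h₂, h, show (u - 6) % 2 = u % 2 by omega]
  · rw [List.getElem?_append_right (by simp [length_sumSeq]; omega)]
    simp only [List.length_append, hopen, length_sumSeq]
    obtain ⟨w, hw, rfl⟩ : ∃ w < 6, u = 6 + 2 * B + w := ⟨u - (6 + 2 * B), by omega, by omega⟩
    rw [Nat.add_sub_cancel_left]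
    interval_cases w <;> simp [slotOp, closeSeq, Nat.add_mod] <;> omega

theorem length_P0 (m B : ℕ) : (P0 m B).length = m * slotLen B := by
  simp only [P0, List.length_flatten, List.map_replicate, List.sum_replicate, length_slot,
    smul_eq_mul]

theorem getElem?_P0 (m B k : ℕ) :
    (P0 m B)[k]? = if k < m * slotLen B then some (slotOp B (k % slotLen B)) else none := by
  split_ifs with hk
  · rw [P0, List.getElem?_flatten_replicate _ (by rwa [length_slot]), length_slot,
      getElem?_slot _ (Nat.mod_lt _ (by simp [slotLen]))]
  · exact List.getElem?_eq_none (by rw [length_P0]; omega)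

def paOp (sz k : ℕ) : Op := if k = 0 then Wr va' else if k ≤ sz then Wr vb' else Wr vc'

theorem length_Pa (sz : ℕ) : (Pa sz).length = sz + 2 := by
  simp [Pa]

theorem getElem?_Pa (sz k : ℕ) : (Pa sz)[k]? = if k < sz + 2 then some (paOp sz k) else none := by
  rcases k with _ | k
  · simp [Pa, paOp]
  · simp only [Pa, List.getElem?_cons_succ, paOp, List.getElem?_append, List.getElem?_replicate]
    split_ifs <;> simp_all <;> omega

section ReductionTrace

variable {m B : ℕ} (s : Fin (3 * m) → ℕ)

theorem length_reductionTrace : (reductionTrace m B s).length = 3 * m + 4 := by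
  simp [reductionTrace]

theorem getElem?_reductionTrace_zero : (reductionTrace m B s)[0]? = some (P0 m B) := rfl

theorem getElem?_reductionTrace_Pa (i : Fin (3 * m)) :
    (reductionTrace m B s)[1 + i.val]? = some (Pa (s i)) := by
  rw [reductionTrace, add_comm, List.getElem?_cons_succ,
    List.getElem?_append_left (by simp), List.getElem?_ofFn]
  simp

theorem getElem?_reductionTrace_A :
    (reductionTrace m B s)[3 * m + 1]? = some (List.replicate (3 * m) (Wr va)) := by
  simp [reductionTrace]

theorem getElem?_reductionTrace_B :
    (reductionTrace m B s)[3 * m + 2]? = some (List.replicate (m * B) (Wr vb)) := by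
  simp [reductionTrace]

theorem getElem?_reductionTrace_C :
    (reductionTrace m B s)[3 * m + 3]? = some (List.replicate (3 * m) (Wr vc)) := by
  simp [reductionTrace]

theorem opAt_of_val_eq_zero (p : Pos (reductionTrace m B s)) (hp : p.1.val = 0) :
    p.2.val < m * slotLen B ∧ opAt p = slotOp B (p.2.val % slotLen B) := by
  have := p.getElem?_opAt (by rw [hp]; exact getElem?_reductionTrace_zero s)
  rw [getElem?_P0] at this
  split_ifs at this with hk
  exact ⟨hk, (Option.some_inj.mp this).symm⟩

theorem reductionTrace_cases (p : Pos (reductionTrace m B s)) :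
    (p.1.val = 0 ∧ p.2.val < m * slotLen B ∧ opAt p = slotOp B (p.2.val % slotLen B)) ∨
    (∃ i : Fin (3 * m), p.1.val = 1 + i ∧ p.2.val < s i + 2 ∧ opAt p = paOp (s i) p.2.val) ∨
    (p.1.val = 3 * m + 1 ∧ p.2.val < 3 * m ∧ opAt p = Wr va) ∨
    (p.1.val = 3 * m + 2 ∧ p.2.val < m * B ∧ opAt p = Wr vb) ∨
    (p.1.val = 3 * m + 3 ∧ p.2.val < 3 * m ∧ opAt p = Wr vc) := by
  have hn : p.1.val < 3 * m + 4 := p.1.isLt.trans_eq (length_reductionTrace s)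
  have replicate_cases {c : ℕ} {o : Op}
      (hl : (reductionTrace m B s)[p.1.val]? = some (List.replicate c o)) :
      p.2.val < c ∧ opAt p = o := by
    have := p.getElem?_opAt hl
    rw [List.getElem?_replicate] at this
    split_ifs at this with hk
    exact ⟨hk, (Option.some_inj.mp this).symm⟩
  obtain h | h | h | h | h : p.1.val = 0 ∨ (p.1.val ≠ 0 ∧ p.1.val ≤ 3 * m) ∨ p.1.val = 3 * m + 1 ∨
      p.1.val = 3 * m + 2 ∨ p.1.val = 3 * m + 3 := by omega
  · exact Or.inl ⟨h, opAt_of_val_eq_zero s p h⟩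
  · set i : Fin (3 * m) := ⟨p.1.val - 1, by omega⟩
    have hi : p.1.val = 1 + i.val := by simp [i]; omega
    have := p.getElem?_opAt (by rw [hi]; exact getElem?_reductionTrace_Pa s i)
    rw [getElem?_Pa] at this
    split_ifs at this with hk
    exact Or.inr (Or.inl ⟨i, hi, hk, (Option.some_inj.mp this).symm⟩)
  · exact Or.inr (Or.inr (Or.inl
      ⟨h, replicate_cases (by rw [h]; exact getElem?_reductionTrace_A s)⟩))
  · exact Or.inr (Or.inr (Or.inr (Or.inl
      ⟨h, replicate_cases (by rw [h]; exact getElem?_reductionTrace_B s)⟩)))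
  · exact Or.inr (Or.inr (Or.inr (Or.inr
      ⟨h, replicate_cases (by rw [h]; exact getElem?_reductionTrace_C s)⟩)))

theorem isRead_opAt_iff (p : Pos (reductionTrace m B s)) :
    (opAt p).isRead = true ↔ p.1.val = 0 := by
  rcases reductionTrace_cases s p with ⟨h, -, hop⟩ | ⟨i, h, -, hop⟩ | ⟨h, -, hop⟩ | ⟨h, -, hop⟩ |
      ⟨h, -, hop⟩ <;> rw [hop, h]
  · simp [slotOp_isRead]
  · unfold paOp; split_ifs <;> simp [Wr]
  all_goals simp [Wr]

end ReductionTrace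

-- The `k`-th write of an auxiliary process serving `d` reads in each slot of length `W`, at the
-- offsets `a, a + 2, …, a + 2 (d - 1)`.
def auxIndex (W d a k : ℕ) : ℕ := W * (k / d) + (a + 2 * (k % d))

theorem auxIndex_lt_auxIndex {W d a k k' : ℕ} (h : a + 2 * (d - 1) < W) (hk : k < k') :
    auxIndex W d a k < auxIndex W d a k' := by
  unfold auxIndex
  rcases (Nat.div_le_div_right (c := d) hk.le).eq_or_lt with he | hlt
  · have := Nat.div_add_mod k d
    have := Nat.div_add_mod k' d
    rw [he]
    nlinarith
  · calc W * (k / d) + (a + 2 * (k % d)) < W * (k / d + 1) := by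
          rcases Nat.eq_zero_or_pos d with rfl | hd
          · simp at hlt
          · have := Nat.mod_lt k hd
            rw [Nat.mul_succ]
            omega
      _ ≤ W * (k' / d) := Nat.mul_le_mul_left _ hlt
      _ ≤ _ := Nat.le_add_right _ _

theorem auxIndex_lt_mul {W d a k m : ℕ} (h : a + 2 * (d - 1) < W) (hk : k < m * d) :
    auxIndex W d a k < m * W := by
  have hd : 0 < d := Nat.pos_of_ne_zero (by rintro rfl; simp at hk)
  have hkd : k / d < m := Nat.div_lt_of_lt_mul (by rwa [mul_comm])
  have := Nat.mod_lt k hd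
  calc auxIndex W d a k < W * (k / d + 1) := by unfold auxIndex; rw [Nat.mul_succ]; omega
    _ ≤ W * m := Nat.mul_le_mul_left _ hkd
    _ = m * W := mul_comm _ _

theorem auxIndex_mul_add (W : ℕ) {d : ℕ} (a j : ℕ) {t : ℕ} (ht : t < d) :
    auxIndex W d a (d * j + t) = W * j + (a + 2 * t) := by
  have hd : 0 < d := by omega
  rw [auxIndex, Nat.mul_add_div hd, Nat.div_eq_of_lt ht, Nat.mul_add_mod, Nat.mod_eq_of_lt ht,
    add_zero]

-- The offset in its slot of the read served by the `k`-th operation of `P_{aᵢ}`, where `rank` and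
-- `off` are the number and the total size of the elements of the triple of `aᵢ` preceding it.
def paSlotOffset (B sz rank off k : ℕ) : ℕ :=
  if k = 0 then 2 * rank + 1 else if k ≤ sz then 7 + 2 * (off + (k - 1)) else 7 + 2 * B + 2 * rank

section PaSlotOffset

variable {B sz rank off : ℕ} (hrank : rank ≤ 2) (hoff : off + sz ≤ B)
include hrank hoff

theorem paSlotOffset_lt_paSlotOffset {k k' : ℕ} (hk : k < k') (hk' : k' < sz + 2) :
    paSlotOffset B sz rank off k < paSlotOffset B sz rank off k' := by
  unfold paSlotOffset
  split_ifs <;> omega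

theorem paSlotOffset_lt_slotLen {k : ℕ} :
    paSlotOffset B sz rank off k < slotLen B := by
  unfold paSlotOffset slotLen
  split_ifs <;> omega

end PaSlotOffset

section ServedRead

variable {m : ℕ} (B : ℕ) (s : Fin (3 * m) → ℕ) (f : Fin (3 * m) → Fin m)

def servedRead (n k : ℕ) : ℕ :=
  if h : n ≠ 0 ∧ n - 1 < 3 * m then
    slotLen B * f ⟨n - 1, h.2⟩ +
      paSlotOffset B (s ⟨n - 1, h.2⟩) (fiberRank f ⟨n - 1, h.2⟩) (fiberOffset f s ⟨n - 1, h.2⟩) k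
  else if n = 3 * m + 1 then auxIndex (slotLen B) 3 0 k
  else if n = 3 * m + 2 then auxIndex (slotLen B) B 6 k
  else auxIndex (slotLen B) 3 (6 + 2 * B) k

theorem servedRead_Pa (i : Fin (3 * m)) (k : ℕ) :
    servedRead B s f (1 + i) k =
      slotLen B * f i + paSlotOffset B (s i) (fiberRank f i) (fiberOffset f s i) k := by
  have h : 1 + i.val ≠ 0 ∧ 1 + i.val - 1 < 3 * m := by omega
  rw [servedRead, dif_pos h]
  simp

theorem servedRead_A (k : ℕ) :
    servedRead B s f (3 * m + 1) k = auxIndex (slotLen B) 3 0 k := by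
  simp [servedRead]

theorem servedRead_B (k : ℕ) :
    servedRead B s f (3 * m + 2) k = auxIndex (slotLen B) B 6 k := by
  simp [servedRead]

theorem servedRead_C (k : ℕ) :
    servedRead B s f (3 * m + 3) k = auxIndex (slotLen B) 3 (6 + 2 * B) k := by
  simp [servedRead]

variable {B s f}
variable (hcard : ∀ j, #(univ.filter fun i => f i = j) = 3)
variable (hsum : ∀ j, ∑ i ∈ univ.filter (fun i => f i = j), s i = B)

include hcard in
theorem fiberRank_le_two (i : Fin (3 * m)) : fiberRank f i ≤ 2 := by
  have := fiberRank_lt_card (f := f) i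
  rw [hcard] at this
  omega

include hsum in
theorem fiberOffset_add_le (i : Fin (3 * m)) : fiberOffset f s i + s i ≤ B :=
  hsum (f i) ▸ fiberOffset_add_le_sum s i

include hcard hsum in
theorem servedRead_lt_servedRead {p q : Pos (reductionTrace m B s)} (hpq : p.1 = q.1)
    (hp : p.1.val ≠ 0) (hk : p.2.val < q.2.val) :
    servedRead B s f p.1 p.2 < servedRead B s f q.1 q.2 := by
  replace hpq : p.1.val = q.1.val := congrArg Fin.val hpq
  rw [hpq] at hp ⊢
  rcases reductionTrace_cases s q with ⟨hq, -⟩ | ⟨i, hq, hk', -⟩ | ⟨hq, -⟩ | ⟨hq, -⟩ | ⟨hq, -⟩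
  · exact absurd hq hp
  · rw [hq, servedRead_Pa, servedRead_Pa]
    exact Nat.add_lt_add_left (paSlotOffset_lt_paSlotOffset (fiberRank_le_two hcard i)
      (fiberOffset_add_le hsum i) hk hk') _
  · rw [hq, servedRead_A, servedRead_A]
    exact auxIndex_lt_auxIndex (by unfold slotLen; omega) hk
  · rw [hq, servedRead_B, servedRead_B]
    exact auxIndex_lt_auxIndex (by unfold slotLen; omega) hk
  · rw [hq, servedRead_C, servedRead_C]
    exact auxIndex_lt_auxIndex (by unfold slotLen; omega) hk

include hcard hsum in
theorem servedRead_lt (q : Pos (reductionTrace m B s)) (hq : q.1.val ≠ 0) :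
    servedRead B s f q.1 q.2 < m * slotLen B := by
  rcases reductionTrace_cases s q with
    ⟨hq', -⟩ | ⟨i, hq', -⟩ | ⟨hq', hk, -⟩ | ⟨hq', hk, -⟩ | ⟨hq', hk, -⟩
  · exact absurd hq' hq
  · rw [hq', servedRead_Pa]
    have := paSlotOffset_lt_slotLen (fiberRank_le_two hcard i) (fiberOffset_add_le hsum i)
      (k := q.2.val)
    calc _ < slotLen B * (f i + 1) := by rw [Nat.mul_succ]; omega
      _ ≤ slotLen B * m := Nat.mul_le_mul_left _ (f i).isLt
      _ = m * slotLen B := mul_comm _ _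
  · rw [hq', servedRead_A]
    exact auxIndex_lt_mul (by unfold slotLen; omega) (by omega)
  · rw [hq', servedRead_B]
    exact auxIndex_lt_mul (by unfold slotLen; omega) hk
  · rw [hq', servedRead_C]
    exact auxIndex_lt_mul (by unfold slotLen; omega) (by omega)

variable (B s f) in
def HasServingWrite (k v : ℕ) : Prop :=
  ∃ q : Pos (reductionTrace m B s), q.1.val ≠ 0 ∧ servedRead B s f q.1 q.2 = k ∧ opAt q = Wr v

section Slot

variable (j : Fin m)

theorem hasServingWrite_A {t : ℕ} (ht : t < 3) :
    HasServingWrite B s f (slotLen B * j + 2 * t) va := by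
  obtain ⟨q, hq₁, hq₂, hq⟩ := Pos.exists_of_getElem? (getElem?_reductionTrace_A s)
    (List.getElem?_replicate_of_lt (show 3 * j.val + t < 3 * m by omega))
  refine ⟨q, by omega, ?_, hq⟩
  rw [hq₁, hq₂, servedRead_A, auxIndex_mul_add _ _ _ ht, zero_add]

theorem hasServingWrite_B {v : ℕ} (hv : v < B) :
    HasServingWrite B s f (slotLen B * j + (6 + 2 * v)) vb := by
  have : B * j.val + v < m * B := by nlinarith [j.isLt]
  obtain ⟨q, hq₁, hq₂, hq⟩ := Pos.exists_of_getElem? (getElem?_reductionTrace_B s)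
    (List.getElem?_replicate_of_lt this)
  refine ⟨q, by omega, ?_, hq⟩
  rw [hq₁, hq₂, servedRead_B, auxIndex_mul_add _ _ _ hv]

theorem hasServingWrite_C {t : ℕ} (ht : t < 3) :
    HasServingWrite B s f (slotLen B * j + (6 + 2 * B + 2 * t)) vc := by
  obtain ⟨q, hq₁, hq₂, hq⟩ := Pos.exists_of_getElem? (getElem?_reductionTrace_C s)
    (List.getElem?_replicate_of_lt (show 3 * j.val + t < 3 * m by omega))
  refine ⟨q, by omega, ?_, hq⟩
  rw [hq₁, hq₂, servedRead_C, auxIndex_mul_add _ _ _ ht]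

include hcard in
theorem hasServingWrite_A' {t : ℕ} (ht : t < 3) :
    HasServingWrite B s f (slotLen B * j + (2 * t + 1)) va' := by
  obtain ⟨i, rfl, rfl⟩ := exists_fiberRank_eq (f := f) j (by rwa [hcard])
  obtain ⟨q, hq₁, hq₂, hq⟩ := Pos.exists_of_getElem? (getElem?_reductionTrace_Pa s i)
    (k := 0) (o := Wr va') (by rw [getElem?_Pa, if_pos (by omega)]; rfl)
  refine ⟨q, by omega, ?_, hq⟩
  rw [hq₁, hq₂, servedRead_Pa]
  rfl

include hsum in
theorem hasServingWrite_B' {v : ℕ} (hv : v < B) :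
    HasServingWrite B s f (slotLen B * j + (7 + 2 * v)) vb' := by
  obtain ⟨i, r, rfl, hr, rfl⟩ := exists_fiberOffset_add_eq (f := f) s j (by rwa [hsum])
  obtain ⟨q, hq₁, hq₂, hq⟩ := Pos.exists_of_getElem? (getElem?_reductionTrace_Pa s i)
    (k := 1 + r) (o := Wr vb') (by rw [getElem?_Pa, if_pos (by omega)]; simp [paOp]; omega)
  refine ⟨q, by omega, ?_, hq⟩
  rw [hq₁, hq₂, servedRead_Pa, paSlotOffset, if_neg (by omega), if_pos (by omega)]
  simp

include hcard in
theorem hasServingWrite_C' {t : ℕ} (ht : t < 3) :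
    HasServingWrite B s f (slotLen B * j + (7 + 2 * B + 2 * t)) vc' := by
  obtain ⟨i, rfl, rfl⟩ := exists_fiberRank_eq (f := f) j (by rwa [hcard])
  obtain ⟨q, hq₁, hq₂, hq⟩ := Pos.exists_of_getElem? (getElem?_reductionTrace_Pa s i)
    (k := s i + 1) (o := Wr vc') (by rw [getElem?_Pa, if_pos (by omega)]; simp [paOp])
  refine ⟨q, by omega, ?_, hq⟩
  rw [hq₁, hq₂, servedRead_Pa, paSlotOffset, if_neg (by omega), if_neg (by omega)]

end Slot

include hcard hsum in
theorem hasServingWrite_slot (j : Fin m) {u : ℕ} (hu : u < slotLen B) :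
    HasServingWrite B s f (slotLen B * j + u) (slotOp B u).val := by
  unfold slotLen at hu
  by_cases h₁ : u < 6
  · obtain ⟨t, ht, rfl | rfl⟩ : ∃ t < 3, u = 2 * t ∨ u = 2 * t + 1 := ⟨u / 2, by omega, by omega⟩
    · simpa [slotOp, h₁, Rd] using hasServingWrite_A j ht
    · simpa [slotOp, h₁, Nat.add_mod, Rd] using hasServingWrite_A' hcard j ht
  by_cases h₂ : u < 6 + 2 * B
  · obtain ⟨v, hv, rfl | rfl⟩ : ∃ v < B, u = 6 + 2 * v ∨ u = 7 + 2 * v :=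
      ⟨(u - 6) / 2, by omega, by omega⟩
    · simpa [slotOp, h₁, h₂, Nat.add_mod, Rd] using hasServingWrite_B j hv
    · simpa [slotOp, h₁, h₂, Nat.add_mod, Rd] using hasServingWrite_B' hsum j hv
  · obtain ⟨t, ht, rfl | rfl⟩ : ∃ t < 3, u = 6 + 2 * B + 2 * t ∨ u = 7 + 2 * B + 2 * t :=
      ⟨(u - 6 - 2 * B) / 2, by omega, by omega⟩
    · simpa [slotOp, h₁, h₂, Nat.add_mod, Rd] using hasServingWrite_C j ht
    · simpa [slotOp, h₁, h₂, Nat.add_mod, Rd] using hasServingWrite_C' hcard j ht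

include hcard hsum in
theorem exists_serving_write (p : Pos (reductionTrace m B s)) (hp : p.1.val = 0) :
    ∃ q : Pos (reductionTrace m B s), q.1.val ≠ 0 ∧ servedRead B s f q.1 q.2 = p.2 ∧
      (opAt q).var = (opAt p).var ∧ (opAt q).val = (opAt p).val := by
  obtain ⟨hk, hop⟩ := opAt_of_val_eq_zero s p hp
  have hW : 0 < slotLen B := by unfold slotLen; omega
  obtain ⟨q, hq₀, hqk, hq⟩ := hasServingWrite_slot hcard hsum
    ⟨p.2 / slotLen B, Nat.div_lt_of_lt_mul (by rwa [mul_comm])⟩ (Nat.mod_lt p.2 hW)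
  rw [Nat.div_add_mod] at hqk
  exact ⟨q, hq₀, hqk, by rw [hq, hop, slotOp_var]; rfl, by rw [hq, hop]; rfl⟩

end ServedRead

theorem sum_length_reductionTrace {m B : ℕ} (s : Fin (3 * m) → ℕ) (hs : ∑ i, s i = m * B) :
    ((reductionTrace m B s).map List.length).sum = 2 * (P0 m B).length := by
  simp only [reductionTrace, List.map_cons, List.map_append, List.map_ofFn, List.sum_cons,
    List.sum_append, List.sum_ofFn, Function.comp_def, length_Pa]
  simp [Finset.sum_add_distrib, hs, length_P0, slotLen]
  ring

theorem stmt10_general (m B : ℕ) (s : Fin (3 * m) → ℕ)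
    (hsol : ThreePartSol m B s) :
    ∃ σ : Pos (reductionTrace m B s) → ℕ, LegalSched (reductionTrace m B s) σ := by
  obtain ⟨f, hcard, hsum⟩ := hsol
  have htotal : ∑ i, s i = m * B := by
    rw [← Finset.sum_fiberwise Finset.univ f s]
    simp [hsum]
  have hr : 0 < (reductionTrace m B s).length := by simp [length_reductionTrace]
  have hne {p : Pos (reductionTrace m B s)} : p.1 ≠ ⟨0, hr⟩ ↔ p.1.val ≠ 0 := by simp [Fin.ext_iff]
  refine exists_legalSched_of_cover ⟨0, hr⟩ (fun p => by rw [isRead_opAt_iff, Fin.ext_iff])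
    (fun p => servedRead B s f p.1 p.2)
    (fun p q hpq hp hk => servedRead_lt_servedRead hcard hsum hpq (hne.1 hp) hk)
    (fun q hq => (servedRead_lt hcard hsum q (hne.1 hq)).trans_eq (length_P0 m B).symm)
    (fun p hp => ?_) (sum_length_reductionTrace s htotal).le
  obtain ⟨q, hq₀, hq⟩ := exists_serving_write hcard hsum p (congrArg Fin.val hp)
  exact ⟨q, hne.2 hq₀, hq⟩

/-- Completeness of the reduction: if the Unary 3-Partition instance admits a
partition into `m` triples each summing to `B`, then the constructed trace admits a
legal schedule respecting program order. -/
theorem stmt10 (m B : ℕ) (s : Fin (3 * m) → ℕ) (hm : 0 < m)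
    (hsize : ∀ i, B < 4 * s i ∧ 2 * s i < B)
    (hsum : ∑ i, s i = m * B)
    (hsol : ThreePartSol m B s) :
    ∃ σ : Pos (reductionTrace m B s) → ℕ, LegalSched (reductionTrace m B s) σ :=
  stmt10_general m B s hsol
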